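/- arXiv:0912.0766 — 2 statements merged into one kernel-verified Lean document; each statement's English description precedes it below -/
import Mathlib

section
/- Let f_θ(x) = θ·sin²(πx)/(2π²x²) for θ > 0. Then for every t₀ ∈ ℝ, every t ≥ t₀, and every α > 0, the quantity |∫_{t₀}^{t} f_θ(x)·e^{α(x−t)} dx| ≤ θ/2 < θ. In particular, the integrate-and-fire sampler with threshold θ never fires on this signal. -/
/-!
On `[t₀, t]` the leaky weight `exp (α (x - t))` lies in `(0, 1]` and the signal
`θ sin²(πx) / (2π²x²)` is `θ/2` times the nonnegative function `sin²(πx) / (πx)²`, so the leaky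
integral is at most `θ/2` times the total integral of `sin²(πx) / (πx)²`. That integral is `1`:
`sin²(πξ) / (πξ)²` is the Fourier transform of the triangle function `max (1 - |t|) 0`, so
Fourier inversion at `0` identifies the integral with the value of the triangle at `0`.
-/

open Real MeasureTheory intervalIntegral FourierTransform

-- At `x = 0` this is `0 / 0 = 0` rather than the limit `1`; integrals do not see the difference.
noncomputable def sincSq (x : ℝ) : ℝ := sin (π * x) ^ 2 / (π ^ 2 * x ^ 2)

noncomputable def triangle (t : ℝ) : ℝ := max (1 - |t|) 0

lemma sincSq_nonneg (x : ℝ) : 0 ≤ sincSq x := by unfold sincSq; positivity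

lemma sincSq_le_two_mul_inv_one_add_sq (x : ℝ) : sincSq x ≤ 2 * (1 + x ^ 2)⁻¹ := by
  rcases eq_or_ne x 0 with rfl | hx
  · simp [sincSq]
  have hπx : 0 < π ^ 2 * x ^ 2 := by positivity
  have hsmall : sin (π * x) ^ 2 ≤ π ^ 2 * x ^ 2 := by
    simpa [mul_pow] using sin_sq_le_sq (x := π * x)
  have hone : sin (π * x) ^ 2 ≤ 1 := sin_sq_le_one _
  have hπ : 1 ≤ π ^ 2 := by nlinarith [pi_gt_three]
  rw [sincSq, div_le_iff₀ hπx, ← div_eq_mul_inv, div_mul_eq_mul_div, le_div_iff₀ (by positivity)]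
  nlinarith

lemma integrable_sincSq : Integrable sincSq :=
  (integrable_inv_one_add_sq.const_mul 2).mono'
    (Measurable.aestronglyMeasurable (by unfold sincSq; fun_prop))
    (.of_forall fun x => by
      rw [norm_of_nonneg (sincSq_nonneg x)]
      exact sincSq_le_two_mul_inv_one_add_sq x)

lemma continuous_triangle : Continuous triangle := by unfold triangle; fun_prop

lemma triangle_eq_zero_of_notMem_Icc {t : ℝ} (ht : t ∉ Set.Icc (-1) 1) : triangle t = 0 := by
  rw [Set.mem_Icc, ← abs_le, not_le] at ht
  exact max_eq_right (by linarith)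

lemma triangle_eq_one_sub_of_mem_Icc {t : ℝ} (ht : t ∈ Set.Icc 0 1) : triangle t = 1 - t := by
  rw [triangle, abs_of_nonneg ht.1, max_eq_left (by linarith [ht.2])]

lemma triangle_neg (t : ℝ) : triangle (-t) = triangle t := by simp [triangle]

lemma integrable_triangle : Integrable triangle :=
  continuous_triangle.integrable_of_hasCompactSupport
    (HasCompactSupport.intro isCompact_Icc fun _ => triangle_eq_zero_of_notMem_Icc)

lemma hasDerivAt_cexp_mul_one_sub_antideriv {c : ℂ} (hc : c ≠ 0) (x : ℝ) :
    HasDerivAt (fun v : ℝ => Complex.exp (c * v) * ((1 - v) / c + 1 / c ^ 2))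
      (Complex.exp (c * x) * (1 - x)) x := by
  have hlin : HasDerivAt (fun v : ℝ => c * (v : ℂ)) c x := by
    simpa using ((hasDerivAt_id (x : ℂ)).const_mul c).comp_ofReal
  have haff : HasDerivAt (fun v : ℝ => (1 - (v : ℂ)) / c + 1 / c ^ 2) (-1 / c) x := by
    simpa using
      ((((hasDerivAt_id (x : ℂ)).const_sub 1).comp_ofReal).div_const c).add_const (1 / c ^ 2)
  refine (hlin.cexp.mul haff).congr_deriv ?_
  field_simp
  ring

lemma integral_cexp_mul_one_sub {c : ℂ} (hc : c ≠ 0) :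
    ∫ v in (0 : ℝ)..1, Complex.exp (c * v) * (1 - v) = (Complex.exp c - 1 - c) / c ^ 2 := by
  rw [integral_eq_sub_of_hasDerivAt (fun x _ => hasDerivAt_cexp_mul_one_sub_antideriv hc x)
    (by apply Continuous.intervalIntegrable; fun_prop)]
  simp only [Complex.ofReal_one, Complex.ofReal_zero, mul_one, mul_zero, Complex.exp_zero]
  field_simp
  ring

lemma integral_cexp_mul_triangle {c : ℂ} (hc : c ≠ 0) :
    ∫ v : ℝ, Complex.exp (c * v) * triangle v = (Complex.exp c + Complex.exp (-c) - 2) / c ^ 2 := by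
  have hcont : Continuous fun v : ℝ => Complex.exp (c * v) * triangle v := by
    have := continuous_triangle; fun_prop
  have hright : ∫ v in (0 : ℝ)..1, Complex.exp (c * v) * triangle v
      = (Complex.exp c - 1 - c) / c ^ 2 := by
    rw [← integral_cexp_mul_one_sub hc]
    refine integral_congr fun v hv => ?_
    rw [Set.uIcc_of_le zero_le_one] at hv
    simp [triangle_eq_one_sub_of_mem_Icc hv]
  have hleft : ∫ v in (-1 : ℝ)..0, Complex.exp (c * v) * triangle v
      = (Complex.exp (-c) - 1 + c) / c ^ 2 := by
    rw [← neg_zero, ← integral_comp_neg, show (Complex.exp (-c) - 1 + c) / c ^ 2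
      = (Complex.exp (-c) - 1 - -c) / (-c) ^ 2 by ring,
      ← integral_cexp_mul_one_sub (neg_ne_zero.2 hc)]
    refine integral_congr fun v hv => ?_
    rw [Set.uIcc_of_le zero_le_one] at hv
    simp [triangle_neg, triangle_eq_one_sub_of_mem_Icc hv]
  have hsupp : ∫ v : ℝ, Complex.exp (c * v) * triangle v
      = ∫ v in (-1 : ℝ)..1, Complex.exp (c * v) * triangle v := by
    rw [integral_of_le (by norm_num), ← integral_Icc_eq_integral_Ioc]
    exact (setIntegral_eq_integral_of_forall_compl_eq_zero fun v hv => by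
      simp [triangle_eq_zero_of_notMem_Icc hv]).symm
  rw [hsupp, ← integral_add_adjacent_intervals (hcont.intervalIntegrable _ 0)
    (hcont.intervalIntegrable _ _), hleft, hright]
  ring

lemma fourier_triangle {ξ : ℝ} (hξ : ξ ≠ 0) : 𝓕 (fun t => (triangle t : ℂ)) ξ = sincSq ξ := by
  set c : ℂ := (-2 * π * ξ : ℝ) * Complex.I
  have hc : c ≠ 0 := by simp [c, pi_ne_zero, hξ]
  have hexp : Complex.exp c + Complex.exp (-c) - 2 = -4 * Complex.sin (π * ξ) ^ 2 := by
    have h2cos : 2 * Complex.cos (-2 * π * ξ : ℝ) = Complex.exp c + Complex.exp (-c) := by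
      rw [Complex.two_cos, neg_mul ((-2 * π * ξ : ℝ) : ℂ)]
    rw [← Complex.ofReal_cos, show -2 * π * ξ = 2 * -(π * ξ) by ring,
      Real.cos_two_mul_eq_one_sub, Real.sin_neg] at h2cos
    push_cast at h2cos
    linear_combination -h2cos
  have hc_sq : c ^ 2 = -4 * π ^ 2 * ξ ^ 2 := by
    simp only [c, mul_pow, Complex.I_sq]; push_cast; ring
  rw [fourier_real_eq_integral_exp_smul]
  simp_rw [smul_eq_mul, show ∀ v : ℝ, ((-2 * π * v * ξ : ℝ) : ℂ) * Complex.I = c * v from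
    fun v => by simp only [c]; push_cast; ring]
  rw [integral_cexp_mul_triangle hc, hexp, hc_sq, sincSq]
  push_cast
  field_simp

lemma integral_sincSq : ∫ x, sincSq x = 1 := by
  have hfourier : (fun ξ : ℝ => (sincSq ξ : ℂ)) =ᵐ[volume] 𝓕 (fun t => (triangle t : ℂ)) := by
    filter_upwards [compl_mem_ae_iff.2 (measure_singleton (0 : ℝ))] with ξ hξ
    exact (fourier_triangle hξ).symm
  have hinv : 𝓕⁻ (𝓕 (fun t => (triangle t : ℂ))) 0 = triangle 0 :=
    integrable_triangle.ofReal.fourierInv_fourier_eq (integrable_sincSq.ofReal.congr hfourier)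
      (Complex.continuous_ofReal.comp continuous_triangle).continuousAt
  rw [fourierInv_eq] at hinv
  simp only [inner_zero_right, AddChar.map_zero_eq_one, one_smul] at hinv
  rw [← integral_congr_ae hfourier, integral_complex_ofReal] at hinv
  simpa [triangle] using hinv

lemma abs_intervalIntegral_mul_le_integral {f w : ℝ → ℝ} {a b : ℝ} (hab : a ≤ b)
    (hf : Integrable f) (hf_nonneg : 0 ≤ f) (hw : ∀ x ∈ Set.Ioc a b, |w x| ≤ 1) :
    |∫ x in a..b, f x * w x| ≤ ∫ x, f x := by
  rw [← norm_eq_abs]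
  calc ‖∫ x in a..b, f x * w x‖ ≤ ∫ x in a..b, f x :=
        intervalIntegral.norm_integral_le_of_norm_le hab (.of_forall fun x hx => by
          rw [norm_mul, norm_of_nonneg (hf_nonneg x)]
          exact mul_le_of_le_one_right (hf_nonneg x) (hw x hx)) hf.intervalIntegrable
    _ ≤ ∫ x, f x := by
        rw [integral_of_le hab]
        exact setIntegral_le_integral hf (.of_forall hf_nonneg)

/-- The signal `f_θ(x) = θ sin²(πx)/(2π²x²)` never makes the integrate-and-fire
sampler fire: for every `t₀`, every `t ≥ t₀` and every leak `α > 0`, the leaky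
integral stays bounded by `θ/2 < θ`. -/
theorem if_never_fires (θ : ℝ) (hθ : 0 < θ) (t₀ t α : ℝ) (ht : t₀ ≤ t) (hα : 0 < α) :
    |∫ x in t₀..t, θ * Real.sin (π * x) ^ 2 / (2 * π ^ 2 * x ^ 2) *
      Real.exp (α * (x - t))| ≤ θ / 2 ∧ θ / 2 < θ := by
  have hsinc : ∀ x, θ * sin (π * x) ^ 2 / (2 * π ^ 2 * x ^ 2) = θ / 2 * sincSq x := fun x => by
    rw [sincSq]; ring
  have hdecay : ∀ x ∈ Set.Ioc t₀ t, |exp (α * (x - t))| ≤ 1 := fun x hx => by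
    rw [abs_of_pos (exp_pos _), exp_le_one_iff]
    exact mul_nonpos_of_nonneg_of_nonpos hα.le (by linarith [hx.2])
  refine ⟨?_, half_lt_self hθ⟩
  simp_rw [hsinc]
  calc _ ≤ ∫ x, θ / 2 * sincSq x := abs_intervalIntegral_mul_le_integral ht
        (integrable_sincSq.const_mul _) (fun x => mul_nonneg (by positivity) (sincSq_nonneg x))
        hdecay
    _ = θ / 2 := by rw [MeasureTheory.integral_const_mul, integral_sincSq, mul_one]
end

section
/- Let f ∈ PW_Ω, α > 0, θ > 0, and v(t) = ∫_{−∞}^{t} f(x)·e^{α(x−t)} dx. Then there is no infinite increasing sequence t₀ < t₁ < … with t_n → ∞ such that |∫_{t_j}^{t_{j+1}} f(x)·e^{α(x−t_{j+1})} dx| = θ for all j. In other words, the integrate-and-fire sampler produces only finitely many firing instants. -/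
/-!
By Cauchy–Schwarz, the firing integral over `[a, b]` is at most
`(∫_a^b |f|²)^{1/2} · (∫_a^b e^{2α(x-b)} dx)^{1/2} ≤ (∫_a^∞ |f|² / 2α)^{1/2}`.
Since `f ∈ L²`, this tail bound tends to `0` as `a → ∞`, so along any sequence of firing
instants tending to infinity it eventually drops below the threshold `θ`.
-/

open Real MeasureTheory FourierTransform Filter intervalIntegral
open Set Topology

theorem integral_Ioc_exp_sq_le {α : ℝ} (hα : 0 < α) {a b : ℝ} (hab : a ≤ b) :
    ∫ x in Ioc a b, exp (α * (x - b)) ^ 2 ≤ 1 / (2 * α) := by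
  have hsq : ∀ x, exp (α * (x - b)) ^ 2 = exp (2 * α * x + -(2 * α * b)) := fun x ↦ by
    rw [← exp_nat_mul]; ring_nf
  simp_rw [hsq]
  rw [← integral_of_le hab, integral_comp_mul_add exp (by positivity) _, integral_exp,
    show 2 * α * b + -(2 * α * b) = 0 by ring, exp_zero, smul_eq_mul, one_div]
  exact mul_le_of_le_one_right (by positivity) (sub_le_self _ (exp_pos _).le)

theorem norm_integral_mul_exp_le {f : ℝ → ℂ} {α a b : ℝ} (hα : 0 < α) (hab : a ≤ b)
    (hf : MemLp f 2 (volume.restrict (Ioc a b))) :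
    ‖∫ x in a..b, f x * (exp (α * (x - b)) : ℂ)‖ ≤
      √((∫ x in Ioc a b, ‖f x‖ ^ 2) / (2 * α)) := by
  have hexp :
      MemLp (fun x ↦ exp (α * (x - b))) (ENNReal.ofReal 2) (volume.restrict (Ioc a b)) := by
    refine MemLp.of_bound (by fun_prop) 1 ?_
    filter_upwards [ae_restrict_mem measurableSet_Ioc] with x hx
    rw [norm_of_nonneg (exp_pos _).le, exp_le_one_iff]
    nlinarith [hx.2]
  have hCS := integral_mul_le_Lp_mul_Lq_of_nonneg Real.HolderConjugate.two_two
    (ae_of_all _ fun x ↦ norm_nonneg (f x)) (ae_of_all _ fun x ↦ (exp_pos _).le)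
    (by simpa using hf.norm) hexp
  simp only [rpow_two, ← sqrt_eq_rpow] at hCS
  calc ‖∫ x in a..b, f x * (exp (α * (x - b)) : ℂ)‖
      ≤ ∫ x in Ioc a b, ‖f x‖ * exp (α * (x - b)) := by
        rw [integral_of_le hab]
        refine (MeasureTheory.norm_integral_le_integral_norm _).trans_eq
          (integral_congr_ae (ae_of_all _ fun x ↦ ?_))
        simp only [norm_mul, Complex.norm_real, norm_of_nonneg (exp_pos _).le]
    _ ≤ √(∫ x in Ioc a b, ‖f x‖ ^ 2) * √(∫ x in Ioc a b, exp (α * (x - b)) ^ 2) :=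
        hCS
    _ ≤ √(∫ x in Ioc a b, ‖f x‖ ^ 2) * √(1 / (2 * α)) := by
        gcongr; exact integral_Ioc_exp_sq_le hα hab
    _ = √((∫ x in Ioc a b, ‖f x‖ ^ 2) / (2 * α)) := by
        rw [← sqrt_mul (integral_nonneg fun x ↦ by positivity), mul_one_div]

theorem if_finitely_many_firings_general (α θ : ℝ) (hα : 0 < α) (hθ : 0 < θ)
    (f : ℝ → ℂ) (hf2 : MemLp f 2) :
    ¬ ∃ t : ℕ → ℝ, StrictMono t ∧ Tendsto t atTop atTop ∧
      ∀ j : ℕ, ‖∫ x in (t j)..(t (j + 1)),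
        f x * (Real.exp (α * (x - t (j + 1))) : ℂ)‖ = θ := by
  rintro ⟨t, hmono, htop, hfire⟩
  have hsq : Integrable (fun x ↦ ‖f x‖ ^ 2) := hf2.integrable_norm_pow two_ne_zero
  have htail :
      Tendsto (fun j ↦ √((∫ x in Ioi (t j), ‖f x‖ ^ 2) / (2 * α))) atTop (𝓝 0) := by
    simpa using ((tendsto_integral_Ioi_zero htop).div_const (2 * α)).sqrt
  obtain ⟨j, hj⟩ := (htail.eventually (gt_mem_nhds hθ)).exists
  have hab : t j ≤ t (j + 1) := hmono.monotone j.le_succ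
  refine (hfire j).not_lt (lt_of_le_of_lt ?_ hj)
  calc _ ≤ √((∫ x in Ioc (t j) (t (j + 1)), ‖f x‖ ^ 2) / (2 * α)) :=
        norm_integral_mul_exp_le hα hab (hf2.restrict _)
    _ ≤ _ := by
        gcongr
        · exact ae_of_all _ fun x ↦ by positivity
        · exact hsq.integrableOn
        · exact Ioc_subset_Ioi_self

/-- The integrate-and-fire sampler applied to a bandlimited signal produces only
finitely many firing instants: there is no infinite increasing sequence of
times, tending to infinity, on which the firing condition holds at every step. -/
theorem if_finitely_many_firings (Ω α θ : ℝ) (hΩ : 0 < Ω) (hα : 0 < α) (hθ : 0 < θ)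
    (f : ℝ → ℂ) (hf2 : MemLp f 2)
    (hsupp : Function.support (𝓕 f) ⊆ Set.Icc (-Ω) Ω) :
    ¬ ∃ t : ℕ → ℝ, StrictMono t ∧ Tendsto t atTop atTop ∧
      ∀ j : ℕ, ‖∫ x in (t j)..(t (j + 1)),
        f x * (Real.exp (α * (x - t (j + 1))) : ℂ)‖ = θ :=
  if_finitely_many_firings_general α θ hα hθ f hf2
end
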